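/- Let χ : ℝ → ℝ be smooth with χ = 1 on [−ε, ε] and supp χ ⊆ (−2ε, 2ε), and set χ₋ := Θ⁻·(1 − χ) (the past part of 1 − χ, a smooth function). Then for every g ∈ 𝒟 and every f ∈ 𝒟 with supp(f) ⊆ Σ_ε := {x ∈ M : |x⁰| < ε}, one has the causal partition identity S_g(f) = S_{g·χ}(g·χ₋)⁻¹ · S_{g·χ}(f) · S_{g·χ}(g·χ₋), where g·ψ denotes the componentwise product of g ∈ 𝒟 with the function (x⁰, x⃗) ↦ ψ(x⁰). -/
import Mathlib


/-!
STATEMENT 4: the causal partition identity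
`S_g(f) = S_{g·χ}(g·χ₋)⁻¹ · S_{g·χ}(f) · S_{g·χ}(g·χ₋)` with `χ₋ = Θ⁻·(1 − χ)`,
for all `f ∈ 𝒟` supported in the time-slice `Σ_ε`.
-/

noncomputable section

/-- Minkowski space `M = ℝ × ℝ³` with Euclidean norm on the spatial part. -/
abbrev Mink : Type := ℝ × EuclideanSpace ℝ (Fin 3)

/-- Causal past relation: `x ≼ y` iff `y⁰ − x⁰ ≥ ‖y⃗ − x⃗‖`. -/
def causalPast (x y : Mink) : Prop := ‖y.2 - x.2‖ ≤ y.1 - x.1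

/-- Causal past `J⁻(A)` of a set `A ⊆ M`. -/
def Jminus (A : Set Mink) : Set Mink := {x | ∃ y ∈ A, causalPast x y}

/-- Membership in `𝒟`: smooth and compactly supported. -/
def IsTest {N : ℕ} (f : Mink → Fin N → ℝ) : Prop :=
  ContDiff ℝ (⊤ : ℕ∞) f ∧ HasCompactSupport f

/-- The relative S-matrix `S_g(f) := S(g)⁻¹ · S(g + f)`. -/
def relS {N : ℕ} {G : Type*} [Group G] (S : (Mink → Fin N → ℝ) → G)
    (g f : Mink → Fin N → ℝ) : G := (S g)⁻¹ * S (g + f)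

/-- The indicator function `Θ⁻` of `(−∞, 0)`. -/
def ThetaMinus : ℝ → ℝ := Set.indicator (Set.Iio (0 : ℝ)) (fun _ => (1 : ℝ))

/-- `g·ψ`: componentwise product of `g ∈ 𝒟` with the function `(x⁰, x⃗) ↦ ψ(x⁰)`. -/
def gProd {N : ℕ} (g : Mink → Fin N → ℝ) (ψ : ℝ → ℝ) : Mink → Fin N → ℝ :=
  fun x i => g x i * ψ x.1

section Aux

lemma thetaMinus_of_neg {t : ℝ} (h : t < 0) : ThetaMinus t = 1 := by
  simp [ThetaMinus, Set.indicator_of_mem (Set.mem_Iio.2 h)]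

lemma thetaMinus_of_nonneg {t : ℝ} (h : 0 ≤ t) : ThetaMinus t = 0 := by
  simp [ThetaMinus, Set.indicator_of_notMem (by simpa using h : t ∉ Set.Iio (0:ℝ))]

lemma gProd_isTest {N : ℕ} {g : Mink → Fin N → ℝ} (hg : IsTest g)
    {ψ : ℝ → ℝ} (hψ : ContDiff ℝ (⊤ : ℕ∞) ψ) : IsTest (gProd g ψ) := by
  refine ⟨contDiff_pi.2 fun i => (contDiff_pi.1 hg.1 i).mul (hψ.comp contDiff_fst), ?_⟩
  refine hg.2.mono fun x hx => ?_
  intro hgx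
  apply hx
  funext i
  simp [gProd, hgx]

lemma isTest_add {N : ℕ} {f g : Mink → Fin N → ℝ} (hf : IsTest f) (hg : IsTest g) :
    IsTest (f + g) := ⟨hf.1.add hg.1, hf.2.add hg.2⟩

lemma tsupport_gProd_subset {N : ℕ} (g : Mink → Fin N → ℝ) (ψ : ℝ → ℝ)
    {P : Set ℝ} (hP : IsClosed P) (hψ0 : ∀ t, t ∉ P → ψ t = 0) :
    tsupport (gProd g ψ) ⊆ {x : Mink | x.1 ∈ P} := by
  apply closure_minimal
  · intro x hx
    by_contra hxP
    apply hx
    funext i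
    simp [gProd, hψ0 _ hxP]
  · exact hP.preimage continuous_fst

lemma Jminus_time {A : Set Mink} {x : Mink} (hx : x ∈ Jminus A) :
    ∃ y ∈ A, x.1 ≤ y.1 := by
  obtain ⟨y, hy, hxy⟩ := hx
  exact ⟨y, hy, by have := norm_nonneg (y.2 - x.2); unfold causalPast at hxy; linarith⟩

end Aux

theorem stmt4 {N : ℕ} (hN : 1 ≤ N) {G : Type*} [Group G]
    (S : (Mink → Fin N → ℝ) → G)
    -- causal factorization property of `S`
    (hS : ∀ f g h : Mink → Fin N → ℝ, IsTest f → IsTest g → IsTest h →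
      tsupport f ∩ Jminus (tsupport h) = ∅ →
      S (f + g + h) = S (f + g) * (S g)⁻¹ * S (g + h))
    -- the time cutoff `χ` and its past part `χ₋ = Θ⁻·(1 − χ)`
    (ε : ℝ) (hε : 0 < ε) (χ : ℝ → ℝ) (hχsmooth : ContDiff ℝ (⊤ : ℕ∞) χ)
    (hχone : ∀ x : ℝ, |x| ≤ ε → χ x = 1)
    (hχsupp : tsupport χ ⊆ Set.Ioo (-(2 * ε)) (2 * ε))
    (χm : ℝ → ℝ) (hχm : χm = fun x => ThetaMinus x * (1 - χ x))
    -- `g` and `f`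
    (g : Mink → Fin N → ℝ) (hg : IsTest g)
    (f : Mink → Fin N → ℝ) (hf : IsTest f)
    (hfsupp : tsupport f ⊆ {x : Mink | |x.1| < ε}) :
    relS S g f =
      (relS S (gProd g χ) (gProd g χm))⁻¹ * relS S (gProd g χ) f *
        relS S (gProd g χ) (gProd g χm) := by
  classical
  set χp : ℝ → ℝ := fun s => (1 - χ s) - χm s with hχp
  have hχm_zero : ∀ s : ℝ, -ε ≤ s → χm s = 0 := by
    intro s hs
    rcases le_or_gt 0 s with h0 | h0
    · simp [hχm, thetaMinus_of_nonneg h0]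
    · have : χ s = 1 := hχone s (by rw [abs_of_neg h0]; linarith)
      simp [hχm, this]
  have hχp_zero : ∀ s : ℝ, s ≤ ε → χp s = 0 := by
    intro s hs
    rcases lt_or_ge s 0 with h0 | h0
    · simp only [hχp, hχm, thetaMinus_of_neg h0]; ring
    · have : χ s = 1 := hχone s (by rw [abs_of_nonneg h0]; linarith)
      simp [hχp, hχm, this, thetaMinus_of_nonneg h0]
  have hχm_smooth : ContDiff ℝ (⊤ : ℕ∞) χm := by
    rw [contDiff_iff_contDiffAt]
    intro t
    rcases lt_or_ge t 0 with ht | ht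
    · have hev : χm =ᶠ[nhds t] fun s => 1 - χ s := by
        filter_upwards [Iio_mem_nhds ht] with s hs
        simp [hχm, thetaMinus_of_neg hs]
      exact ((contDiff_const.sub hχsmooth).contDiffAt).congr_of_eventuallyEq hev
    · have hev : χm =ᶠ[nhds t] fun _ : ℝ => (0:ℝ) := by
        filter_upwards [Ioi_mem_nhds (show -ε < t by linarith)] with s hs
        exact hχm_zero s (le_of_lt hs)
      exact contDiffAt_const.congr_of_eventuallyEq hev
  have hχp_smooth : ContDiff ℝ (⊤ : ℕ∞) χp :=
    (contDiff_const.sub hχsmooth).sub hχm_smooth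
  set a := gProd g χp with ha
  set b := gProd g χ with hb
  set c := gProd g χm with hc
  have hTa : IsTest a := gProd_isTest hg hχp_smooth
  have hTb : IsTest b := gProd_isTest hg hχsmooth
  have hTc : IsTest c := gProd_isTest hg hχm_smooth
  have hTbf : IsTest (b + f) := isTest_add hTb hf
  have hsa : tsupport a ⊆ {x : Mink | x.1 ∈ Set.Ici ε} :=
    tsupport_gProd_subset g χp isClosed_Ici
      (fun t ht => hχp_zero t (le_of_lt (by simpa using ht)))
  have hsc : tsupport c ⊆ {x : Mink | x.1 ∈ Set.Iic (-ε)} :=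
    tsupport_gProd_subset g χm isClosed_Iic
      (fun t ht => hχm_zero t (le_of_lt (by simpa using ht)))
  have hd_ac : tsupport a ∩ Jminus (tsupport c) = ∅ := by
    rw [Set.eq_empty_iff_forall_notMem]
    rintro x ⟨hxa, hxJ⟩
    obtain ⟨y, hy, hxy⟩ := Jminus_time hxJ
    have h1 : ε ≤ x.1 := hsa hxa
    have h2 : y.1 ≤ -ε := hsc hy
    linarith
  have hd_af : tsupport a ∩ Jminus (tsupport f) = ∅ := by
    rw [Set.eq_empty_iff_forall_notMem]
    rintro x ⟨hxa, hxJ⟩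
    obtain ⟨y, hy, hxy⟩ := Jminus_time hxJ
    have h1 : ε ≤ x.1 := hsa hxa
    have h2 : |y.1| < ε := hfsupp hy
    have := abs_lt.1 h2
    linarith [this.2]
  have hd_fc : tsupport f ∩ Jminus (tsupport c) = ∅ := by
    rw [Set.eq_empty_iff_forall_notMem]
    rintro x ⟨hxf, hxJ⟩
    obtain ⟨y, hy, hxy⟩ := Jminus_time hxJ
    have h1 : |x.1| < ε := hfsupp hxf
    have h2 : y.1 ≤ -ε := hsc hy
    have := abs_lt.1 h1
    linarith [this.1]
  have hgdec : g = a + b + c := by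
    funext x i
    simp only [Pi.add_apply, ha, hb, hc, gProd, hχp]
    ring
  have hgf : g + f = a + (b + f) + c := by
    rw [hgdec]; abel
  have e1 : S g = S (a + b) * (S b)⁻¹ * S (b + c) := by
    rw [hgdec]; exact hS a b c hTa hTb hTc hd_ac
  have e2 : S (g + f) = S (a + (b + f)) * (S (b + f))⁻¹ * S (b + f + c) := by
    rw [hgf]; exact hS a (b + f) c hTa hTbf hTc hd_ac
  have e3 : S (a + b + f) = S (a + b) * (S b)⁻¹ * S (b + f) :=
    hS a b f hTa hTb hf hd_af
  have e4 : S (f + b + c) = S (f + b) * (S b)⁻¹ * S (b + c) :=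
    hS f b c hf hTb hTc hd_fc
  have h1 : a + (b + f) = a + b + f := (add_assoc a b f).symm
  have h2 : b + f + c = f + b + c := by abel
  have h3 : f + b = b + f := add_comm f b
  rw [h1, h2, e3, e4, h3] at e2
  simp only [relS]
  rw [e1, e2]
  group

end
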